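/- Let r = 0 (constant power loads). Under the change of variables x := [V*]^{-1}V − 1 (componentwise x_i = V_i/V*_i − 1), the fixed-point equation x = f(x) with f(x) = −(1/4)·P_cri·[P*_L]·r(x), r(x)_i = 1/(1+x_i), has a unique solution in the closed ball {x ∈ ℝ^N : ‖x‖_∞ ≤ δ₋} provided Δ := ‖P_cri P*_L‖_∞ < 1, where δ₋ ∈ [0, 1/2) is the unique solution in [0,1/2) of Δ = 4δ(1−δ). Moreover f is a contraction on this ball. -/

import Mathlib

/-!
On the sup-norm ball of radius `δ < 1/2` every coordinate satisfies `1 + xᵢ ≥ 1 - δ > 0`, so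
`|1/(1+xᵢ)| ≤ 1/(1-δ)` and `1/(1+x) - 1/(1+y) = (y-x)/((1+x)(1+y))` is at most
`‖x - y‖/(1-δ)²`. Since the row sums of `|P_cri [P*_L]|` are at most `Δ = 4δ(1-δ)`, this gives
`‖f x‖ ≤ Δ/(4(1-δ)) = δ` and `‖f x - f y‖ ≤ Δ/(4(1-δ)²) ‖x - y‖ = δ/(1-δ) ‖x - y‖`, and
`δ/(1-δ) < 1`. Banach's fixed point theorem on the (complete) ball finishes the proof.
-/

open Matrix Set

theorem existsUnique_fixedPoint_of_lipschitzOnWith {α : Type*} [MetricSpace α] {f : α → α}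
    {s : Set α} {K : NNReal} (hK : K < 1) (hs : IsComplete s) (hne : s.Nonempty)
    (hsf : MapsTo f s s) (hf : LipschitzOnWith K f s) : ∃! x, x ∈ s ∧ f x = x := by
  have := hs.completeSpace_coe
  have := hne.to_subtype
  have hg : ContractingWith K (hsf.restrict f s s) := ⟨hK, hf.to_restrict⟩
  refine ⟨(ContractingWith.fixedPoint _ hg : s), ⟨Subtype.coe_prop _,
    congrArg Subtype.val (ContractingWith.fixedPoint_isFixedPt hg)⟩, ?_⟩
  rintro y ⟨hy, hfy⟩
  exact congrArg Subtype.val (hg.fixedPoint_unique (x := ⟨y, hy⟩) (Subtype.ext hfy))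

theorem norm_mulVec_le_of_sum_abs_le {m n : Type*} [Fintype m] [Fintype n] {A : Matrix m n ℝ}
    {C : ℝ} (hC : 0 ≤ C) (hA : ∀ i, ∑ j, |A i j| ≤ C) (v : n → ℝ) : ‖A *ᵥ v‖ ≤ C * ‖v‖ := by
  refine (pi_norm_le_iff_of_nonneg (by positivity)).mpr fun i => ?_
  calc ‖(A *ᵥ v) i‖ ≤ ∑ j, |A i j| * |v j| := by
        simpa only [mulVec, dotProduct, Real.norm_eq_abs, abs_mul] using
          Finset.abs_sum_le_sum_abs (fun j => A i j * v j) Finset.univ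
    _ ≤ ∑ j, |A i j| * ‖v‖ := by
        gcongr with j
        exact norm_le_pi_norm v j
    _ ≤ C * ‖v‖ := by
        rw [← Finset.sum_mul]
        exact mul_le_mul_of_nonneg_right (hA i) (norm_nonneg v)

theorem inv_one_add_sub_inv_one_add {ι : Type*} {x y : ι → ℝ} (hx : ∀ j, 1 + x j ≠ 0)
    (hy : ∀ j, 1 + y j ≠ 0) : (1 + x)⁻¹ - (1 + y)⁻¹ = (1 + x)⁻¹ * (1 + y)⁻¹ * (y - x) := by
  ext j
  simp only [Pi.sub_apply, Pi.mul_apply, Pi.inv_apply, Pi.add_apply, Pi.one_apply]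
  field_simp [hx j, hy j]
  ring

section InvOneAdd

variable {ι : Type*} [Fintype ι] {δ : ℝ} {x y : ι → ℝ}

theorem one_sub_le_one_add_apply (hx : ‖x‖ ≤ δ) (j : ι) : 1 - δ ≤ 1 + x j := by
  linarith [(abs_le.mp ((norm_le_pi_norm x j).trans hx)).1]

theorem norm_inv_one_add_le (hδ : δ < 1) (hx : ‖x‖ ≤ δ) : ‖(1 + x)⁻¹‖ ≤ (1 - δ)⁻¹ := by
  have h1δ : 0 < 1 - δ := by linarith
  refine (pi_norm_le_iff_of_nonneg (by positivity)).mpr fun j => ?_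
  have hj := one_sub_le_one_add_apply hx j
  rw [Pi.inv_apply, Pi.add_apply, Pi.one_apply, norm_inv, Real.norm_of_nonneg (by linarith)]
  exact inv_anti₀ h1δ hj

theorem norm_inv_one_add_sub_inv_one_add_le (hδ : δ < 1) (hx : ‖x‖ ≤ δ) (hy : ‖y‖ ≤ δ) :
    ‖(1 + x)⁻¹ - (1 + y)⁻¹‖ ≤ (1 - δ)⁻¹ * (1 - δ)⁻¹ * ‖x - y‖ := by
  have hpos : ∀ {z : ι → ℝ}, ‖z‖ ≤ δ → ∀ j, 1 + z j ≠ 0 := fun hz j =>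
    (lt_of_lt_of_le (by linarith) (one_sub_le_one_add_apply hz j)).ne'
  rw [inv_one_add_sub_inv_one_add (hpos hx) (hpos hy), norm_sub_rev x y]
  refine (norm_mul_le _ _).trans ?_
  gcongr
  refine (norm_mul_le _ _).trans ?_
  gcongr
  · exact norm_inv_one_add_le hδ hx
  · exact norm_inv_one_add_le hδ hy

end InvOneAdd

/-- `(1 + x)⁻¹` is the coordinatewise inverse `r(x)`; for `A = P_cri [P*_L]` this is the
paper's `f`. -/
noncomputable def powerFlowMap {m n : Type*} [Fintype n] (A : Matrix m n ℝ) (x : n → ℝ) :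
    m → ℝ :=
  -(1 / 4 : ℝ) • (A *ᵥ (1 + x)⁻¹)

section PowerFlowMap

variable {m n : Type*} [Fintype m] [Fintype n] {A : Matrix m n ℝ} {δ : ℝ} {x y : n → ℝ}

theorem norm_powerFlowMap_le (hδ : δ < 1) (hA : ∀ i, ∑ j, |A i j| ≤ 4 * δ * (1 - δ))
    (hx : ‖x‖ ≤ δ) : ‖powerFlowMap A x‖ ≤ δ := by
  have hδ0 : 0 ≤ δ := (norm_nonneg x).trans hx
  have h1δ : 0 < 1 - δ := by linarith
  calc ‖powerFlowMap A x‖ = 1 / 4 * ‖A *ᵥ (1 + x)⁻¹‖ := by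
        rw [powerFlowMap, norm_smul, norm_neg, Real.norm_of_nonneg (by norm_num)]
    _ ≤ 1 / 4 * (4 * δ * (1 - δ) * (1 - δ)⁻¹) := by
        gcongr
        refine (norm_mulVec_le_of_sum_abs_le (by positivity) hA _).trans ?_
        gcongr
        exact norm_inv_one_add_le hδ hx
    _ = δ := by field_simp

theorem norm_powerFlowMap_sub_le (hδ : δ < 1) (hA : ∀ i, ∑ j, |A i j| ≤ 4 * δ * (1 - δ))
    (hx : ‖x‖ ≤ δ) (hy : ‖y‖ ≤ δ) :
    ‖powerFlowMap A x - powerFlowMap A y‖ ≤ δ / (1 - δ) * ‖x - y‖ := by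
  have hδ0 : 0 ≤ δ := (norm_nonneg x).trans hx
  have h1δ : 0 < 1 - δ := by linarith
  calc ‖powerFlowMap A x - powerFlowMap A y‖ = 1 / 4 * ‖A *ᵥ ((1 + x)⁻¹ - (1 + y)⁻¹)‖ := by
        rw [powerFlowMap, powerFlowMap, ← smul_sub, ← mulVec_sub, norm_smul, norm_neg,
          Real.norm_of_nonneg (by norm_num)]
    _ ≤ 1 / 4 * (4 * δ * (1 - δ) * ((1 - δ)⁻¹ * (1 - δ)⁻¹ * ‖x - y‖)) := by
        gcongr
        refine (norm_mulVec_le_of_sum_abs_le (by positivity) hA _).trans ?_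
        gcongr
        exact norm_inv_one_add_sub_inv_one_add_le hδ hx hy
    _ = δ / (1 - δ) * ‖x - y‖ := by field_simp

end PowerFlowMap

theorem stmt_15_general {N : ℕ} (Pcri : Matrix (Fin N) (Fin N) ℝ) (PL : Fin N → ℝ)
    (Δ δm : ℝ) (hΔ : Δ = ⨆ i : Fin N, ∑ j, |Pcri i j * PL j|)
    (hδ0 : 0 ≤ δm) (hδhalf : δm < 1 / 2) (hδeq : Δ = 4 * δm * (1 - δm))
    (f : (Fin N → ℝ) → (Fin N → ℝ))
    (hf : ∀ x, f x = fun i => -(1 / 4) * ∑ j, Pcri i j * (PL j * (1 + x j)⁻¹)) :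
    (∀ x ∈ Metric.closedBall (0 : Fin N → ℝ) δm, f x ∈ Metric.closedBall (0 : Fin N → ℝ) δm) ∧
    (∃ K : ℝ, K < 1 ∧ ∀ x ∈ Metric.closedBall (0 : Fin N → ℝ) δm,
      ∀ y ∈ Metric.closedBall (0 : Fin N → ℝ) δm, ‖f x - f y‖ ≤ K * ‖x - y‖) ∧
    (∃! x : Fin N → ℝ, x ∈ Metric.closedBall (0 : Fin N → ℝ) δm ∧ f x = x) := by
  have hδ1 : δm < 1 := by linarith
  have hA : ∀ i, ∑ j, |(Pcri * diagonal PL) i j| ≤ 4 * δm * (1 - δm) := fun i => by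
    simp only [mul_diagonal, ← hδeq, hΔ]
    exact le_ciSup (f := fun i => ∑ j, |Pcri i j * PL j|) (Set.finite_range _).bddAbove i
  have hfA : f = powerFlowMap (Pcri * diagonal PL) := by
    ext x i
    simp [hf, powerFlowMap, mulVec, dotProduct, mul_diagonal, mul_assoc]
  subst hfA
  have hmaps : MapsTo (powerFlowMap (Pcri * diagonal PL)) (Metric.closedBall 0 δm)
      (Metric.closedBall 0 δm) := fun x hx => by
    rw [mem_closedBall_zero_iff] at hx ⊢
    exact norm_powerFlowMap_le hδ1 hA hx
  have hlip : ∀ x ∈ Metric.closedBall (0 : Fin N → ℝ) δm, ∀ y ∈ Metric.closedBall 0 δm,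
      ‖powerFlowMap (Pcri * diagonal PL) x - powerFlowMap (Pcri * diagonal PL) y‖ ≤
        δm / (1 - δm) * ‖x - y‖ := fun x hx y hy =>
    norm_powerFlowMap_sub_le hδ1 hA (mem_closedBall_zero_iff.mp hx) (mem_closedBall_zero_iff.mp hy)
  have hK : δm / (1 - δm) < 1 := (div_lt_one (by linarith)).mpr (by linarith)
  refine ⟨hmaps, ⟨_, hK, hlip⟩, ?_⟩
  refine existsUnique_fixedPoint_of_lipschitzOnWith (K := ⟨δm / (1 - δm), by positivity⟩)
    (by exact_mod_cast hK) Metric.isClosed_closedBall.isComplete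
    ⟨0, Metric.mem_closedBall_self hδ0⟩ hmaps (LipschitzOnWith.of_dist_le_mul fun x hx y hy => ?_)
  rw [dist_eq_norm, dist_eq_norm]
  exact hlip x hx y hy

/-- For `r = 0` (constant power loads), `f(x) = −(1/4) P_cri [P*_L] r(x)` with
`r(x)ᵢ = 1/(1+xᵢ)` maps the sup-norm ball of radius `δ₋` to itself, is a contraction
there, and has a unique fixed point in that ball, provided
`Δ = ‖P_cri P*_L‖_∞ < 1` and `δ₋ ∈ [0, 1/2)` solves `Δ = 4δ(1−δ)`. -/
theorem stmt_15 {N : ℕ} (Pcri : Matrix (Fin N) (Fin N) ℝ) (PL : Fin N → ℝ)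
    (Δ δm : ℝ) (hΔ : Δ = ⨆ i : Fin N, ∑ j, |Pcri i j * PL j|) (hΔ1 : Δ < 1)
    (hδ0 : 0 ≤ δm) (hδhalf : δm < 1 / 2) (hδeq : Δ = 4 * δm * (1 - δm))
    (f : (Fin N → ℝ) → (Fin N → ℝ))
    (hf : ∀ x, f x = fun i => -(1 / 4) * ∑ j, Pcri i j * (PL j * (1 + x j)⁻¹)) :
    (∀ x ∈ Metric.closedBall (0 : Fin N → ℝ) δm, f x ∈ Metric.closedBall (0 : Fin N → ℝ) δm) ∧
    (∃ K : ℝ, K < 1 ∧ ∀ x ∈ Metric.closedBall (0 : Fin N → ℝ) δm,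
      ∀ y ∈ Metric.closedBall (0 : Fin N → ℝ) δm, ‖f x - f y‖ ≤ K * ‖x - y‖) ∧
    (∃! x : Fin N → ℝ, x ∈ Metric.closedBall (0 : Fin N → ℝ) δm ∧ f x = x) :=
  stmt_15_general Pcri PL Δ δm hΔ hδ0 hδhalf hδeq f hf
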